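/- Consider the discrete closed-loop error dynamics e_k = e_{k−1} − J(λI + JᵀJ)⁻¹Jᵀ e_{k−1} with λ > 0. Then the Lyapunov function V_k = (1/2)‖e_k‖² satisfies V_k − V_{k−1} = −Δr_kᵀ(λI + (1/2)JᵀJ)Δr_k ≤ 0, where Δr_k = (λI + JᵀJ)⁻¹Jᵀ e_{k−1}. -/

import Mathlib

/-! The increment `Δr` solves the damped normal equations `(λI + JᵀJ) Δr = Jᵀ e`, so the cross
term `eᵀ J Δr` in the expansion of `‖e - J Δr‖²` equals `Δrᵀ (λI + JᵀJ) Δr`; this gives the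
identity, and `λI + ½ JᵀJ` is positive semidefinite for `λ ≥ 0`. -/

open Matrix

section DampedStep

variable {R m n : Type*} [Fintype m] [Fintype n]

theorem dotProduct_self_sub_mulVec [CommRing R] (e : m → R) (J : Matrix m n R) (r : n → R) :
    (e - J *ᵥ r) ⬝ᵥ (e - J *ᵥ r) = e ⬝ᵥ e - 2 * (Jᵀ *ᵥ e ⬝ᵥ r) + r ⬝ᵥ (Jᵀ * J) *ᵥ r := by
  have hcross (v : m → R) : v ⬝ᵥ J *ᵥ r = Jᵀ *ᵥ v ⬝ᵥ r := by
    rw [dotProduct_mulVec, mulVec_transpose]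
  have hgram : J *ᵥ r ⬝ᵥ J *ᵥ r = r ⬝ᵥ (Jᵀ * J) *ᵥ r := by
    rw [hcross, dotProduct_comm, mulVec_mulVec]
  simp only [sub_dotProduct, dotProduct_sub, dotProduct_comm (J *ᵥ r) e, hcross e, hgram]
  ring

theorem half_dotProduct_self_sub_mulVec_of_damped_normal_eq [Field R] [CharZero R]
    [DecidableEq n] {J : Matrix m n R} {lam : R} {e : m → R} {r : n → R}
    (hr : (lam • (1 : Matrix n n R) + Jᵀ * J) *ᵥ r = Jᵀ *ᵥ e) :
    (1 / 2 : R) * ((e - J *ᵥ r) ⬝ᵥ (e - J *ᵥ r)) - (1 / 2 : R) * (e ⬝ᵥ e) =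
      -(r ⬝ᵥ (lam • (1 : Matrix n n R) + (1 / 2 : R) • (Jᵀ * J)) *ᵥ r) := by
  rw [dotProduct_self_sub_mulVec, ← hr]
  simp only [add_mulVec, smul_mulVec, one_mulVec, add_dotProduct, dotProduct_add,
    smul_dotProduct, dotProduct_smul, smul_eq_mul, dotProduct_comm ((Jᵀ * J) *ᵥ r) r]
  ring

end DampedStep

/-- For the closed-loop error dynamics eₖ = eₖ₋₁ − J(λI+JᵀJ)⁻¹Jᵀeₖ₋₁,
    the Lyapunov function V = (1/2)‖e‖² satisfies
    V_k − V_{k−1} = −Δrᵀ(λI + (1/2)JᵀJ)Δr ≤ 0. -/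
theorem lyapunov_decrease
    (p q : ℕ) (J : Matrix (Fin p) (Fin q) ℝ) (lam : ℝ) (hlam : 0 < lam)
    (ePrev eNow : Fin p → ℝ) (Δr : Fin q → ℝ)
    (hΔr : Δr = (lam • (1 : Matrix (Fin q) (Fin q) ℝ) + Jᵀ * J)⁻¹.mulVec
      (Jᵀ.mulVec ePrev))
    (hE : eNow = ePrev - J.mulVec Δr)
    (Vk Vkm : ℝ)
    (hVk : Vk = (1 / 2 : ℝ) * (eNow ⬝ᵥ eNow))
    (hVkm : Vkm = (1 / 2 : ℝ) * (ePrev ⬝ᵥ ePrev)) :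
    Vk - Vkm = -(Δr ⬝ᵥ (lam • (1 : Matrix (Fin q) (Fin q) ℝ)
        + (1 / 2 : ℝ) • (Jᵀ * J)).mulVec Δr) ∧
      Vk - Vkm ≤ 0 := by
  have hGram : (Jᵀ * J).PosSemidef := by
    simpa using posSemidef_conjTranspose_mul_self J
  have hA : (lam • (1 : Matrix (Fin q) (Fin q) ℝ) + Jᵀ * J).PosDef :=
    (PosDef.one.smul hlam).add_posSemidef hGram
  have hnormal : (lam • (1 : Matrix (Fin q) (Fin q) ℝ) + Jᵀ * J) *ᵥ Δr = Jᵀ *ᵥ ePrev := by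
    rw [hΔr, mulVec_mulVec, mul_nonsing_inv _ ((isUnit_iff_isUnit_det _).mp hA.isUnit),
      one_mulVec]
  have hdecrease : Vk - Vkm = -(Δr ⬝ᵥ (lam • (1 : Matrix (Fin q) (Fin q) ℝ)
      + (1 / 2 : ℝ) • (Jᵀ * J)).mulVec Δr) := by
    rw [hVk, hVkm, hE, half_dotProduct_self_sub_mulVec_of_damped_normal_eq hnormal]
  have hquad :
      0 ≤ Δr ⬝ᵥ (lam • (1 : Matrix (Fin q) (Fin q) ℝ) + (1 / 2 : ℝ) • (Jᵀ * J)) *ᵥ Δr := by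
    have hpsd := (PosSemidef.one.smul hlam.le).add (hGram.smul (by norm_num : (0 : ℝ) ≤ 1 / 2))
    simpa using hpsd.dotProduct_mulVec_nonneg Δr
  exact ⟨hdecrease, by linarith⟩
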